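/- For any sequence r = (r_ℓ)_{ℓ∈ℤ} in [0,1], the sets F_n^r = { σ^a ∘ f_𝐛 : a ∈ [−2^n, 2^n], 𝐛 ∈ B_n } form a left Følner sequence in the Lamplighter group G = ⟨f, σ⟩, i.e., |g F_n^r Δ F_n^r| / |F_n^r| → 0 for every g ∈ G. -/

import Mathlib

open Filter Topology

noncomputable section

/-- The shift `s ↦ s - 1` on the one-point compactification `ℤ ∪ {∞}`, fixing `∞`. -/
def shiftOP : Equiv.Perm (OnePoint ℤ) :=
  (Equiv.optionCongr (Equiv.subRight (1 : ℤ)) : Equiv.Perm (Option ℤ))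

/-- The phase space `X = (ℤ ∪ {∞}) × {0,1}`. -/
abbrev LampX : Type := OnePoint ℤ × Bool

/-- The transposition `f` swapping `(0,1)` and `(0,0)`. -/
def lampF : Equiv.Perm LampX :=
  haveI : DecidableEq LampX := Classical.decEq _
  Equiv.swap (((0 : ℤ) : OnePoint ℤ), true) (((0 : ℤ) : OnePoint ℤ), false)

/-- The shift `σ` on `X`, decrementing the integer coordinate. -/
def lampSigma : Equiv.Perm LampX := (shiftOP).prodCongr (Equiv.refl Bool)

/-- `f_n = σ^{-n} ∘ f ∘ σ^n`. -/
def lampfn (n : ℤ) : Equiv.Perm LampX := lampSigma ^ (-n) * lampF * lampSigma ^ n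

/-- The Lamplighter group `G = ⟨f, σ⟩`. -/
def lampG : Subgroup (Equiv.Perm LampX) := Subgroup.closure {lampF, lampSigma}

/-- For `l = [b_1, …, b_k]`, the composition `f_{b_k} ∘ ⋯ ∘ f_{b_1}`. -/
def lampProd (l : List ℤ) : Equiv.Perm LampX := (l.reverse.map lampfn).prod

open scoped symmDiff

/-- `f_𝐛` for a finite set `𝐛 ⊆ ℤ`: the composition `f_{b_m} ∘ ⋯ ∘ f_{b_1}` where
`b_1 < ⋯ < b_m` enumerates `𝐛` increasingly. -/
def lampfB (b : Finset ℤ) : Equiv.Perm LampX := lampProd (b.sort (· ≤ ·))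

/-!
Write `σ^a ∘ f_𝐛` as the pair `(a, 𝐛)`; this coordinatisation is injective, left
multiplication by `σ` shifts `a` by one, and left multiplication by `f` toggles `a` in `𝐛`.
Since `|g F Δ F|` is subadditive in `g` and invariant under `g ↦ g⁻¹`, the `g` with
`|g F_n Δ F_n| = o(|F_n|)` form a subgroup, so only `σ` and `f` need checking; and since
`|g F| = |F|`, `|g F Δ F| = 2 |F \ g F|`. For `σ`, only pairs with `a = -2^n` lie in
`F_n \ σ F_n`. For `f`, toggling an `a` outside the window `[-2n, 2n]` keeps `𝐛` in `B_n`,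
so `|F_n \ f F_n| ≤ (4n+1) |B_n|`, against `|F_n| ≥ 2^n |B_n|`.
-/

open scoped Pointwise

namespace Finset

variable {G : Type*} [Group G] [DecidableEq G]

lemma card_smul_symmDiff_self (g : G) (F : Finset G) :
    ((g • F) ∆ F).card = 2 * (F \ g • F).card := by
  rw [symmDiff_def, sup_eq_union, card_union_of_disjoint disjoint_sdiff_sdiff,
    card_sdiff_comm (card_smul_finset g F), two_mul]

lemma card_inv_smul_symmDiff_self (g : G) (F : Finset G) :
    ((g⁻¹ • F) ∆ F).card = ((g • F) ∆ F).card := by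
  rw [← card_smul_finset g, smul_finset_symmDiff, smul_inv_smul, symmDiff_comm]

lemma card_mul_smul_symmDiff_self_le (g₁ g₂ : G) (F : Finset G) :
    (((g₁ * g₂) • F) ∆ F).card ≤ ((g₁ • F) ∆ F).card + ((g₂ • F) ∆ F).card :=
  calc (((g₁ * g₂) • F) ∆ F).card
      ≤ (((g₁ * g₂) • F) ∆ (g₁ • F)).card + ((g₁ • F) ∆ F).card :=
        (card_le_card (symmDiff_triangle _ _ _)).trans (card_union_le _ _)
    _ = ((g₂ • F) ∆ F).card + ((g₁ • F) ∆ F).card := by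
        rw [mul_smul, ← smul_finset_symmDiff, card_smul_finset]
    _ = _ := add_comm _ _

lemma card_image_sdiff_smul_image_le {P : Type*} (φ : P → G) (g : G) (S T : Finset P)
    (h : ∀ p ∈ S, p ∉ T → ∃ q ∈ S, g * φ q = φ p) :
    (S.image φ \ g • S.image φ).card ≤ T.card := by
  refine (card_le_card fun y hy => ?_).trans (card_image_le (f := φ))
  obtain ⟨hyS, hygS⟩ := mem_sdiff.mp hy
  obtain ⟨p, hp, rfl⟩ := mem_image.mp hyS
  by_contra hpT
  obtain ⟨q, hq, hqp⟩ := h p hp fun hT => hpT (mem_image_of_mem φ hT)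
  exact hygS (hqp ▸ smul_mem_smul_finset (mem_image_of_mem φ hq))

end Finset

section Folner

variable {G : Type*} [Group G] [DecidableEq G]

def folnerSubgroup (F : ℕ → Finset G) : Subgroup G where
  carrier := {g | Tendsto (fun n => (((g • F n) ∆ F n).card : ℝ) / (F n).card) atTop (𝓝 0)}
  one_mem' := by simp
  inv_mem' {g} hg := by
    simpa only [Set.mem_ofPred_eq, Finset.card_inv_smul_symmDiff_self] using hg
  mul_mem' {g₁ g₂} h₁ h₂ := by
    refine squeeze_zero (fun n => by positivity) (fun n => ?_) (by simpa using h₁.add h₂)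
    rw [← add_div]
    gcongr
    exact_mod_cast Finset.card_mul_smul_symmDiff_self_le g₁ g₂ (F n)

lemma mem_folnerSubgroup_of_tendsto_card_sdiff {F : ℕ → Finset G} {g : G}
    (h : Tendsto (fun n => ((F n \ g • F n).card : ℝ) / (F n).card) atTop (𝓝 0)) :
    g ∈ folnerSubgroup F := by
  simpa only [folnerSubgroup, Subgroup.mem_mk, Submonoid.mem_mk, Subsemigroup.mem_mk,
    Set.mem_ofPred_eq, Finset.card_smul_symmDiff_self, Nat.cast_mul, Nat.cast_ofNat, mul_div_assoc,
    mul_zero] using h.const_mul 2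

end Folner

lemma tendsto_four_mul_add_one_div_two_pow :
    Tendsto (fun n : ℕ => (4 * n + 1 : ℝ) / 2 ^ n) atTop (𝓝 0) := by
  have h := ((tendsto_self_mul_const_pow_of_lt_one (r := (1 / 2 : ℝ)) (by norm_num)
    (by norm_num)).const_mul 4).add (tendsto_pow_atTop_nhds_zero_of_lt_one (r := (1 / 2 : ℝ))
    (by norm_num) (by norm_num))
  rw [mul_zero, add_zero] at h
  refine h.congr fun n => ?_
  rw [one_div_pow, add_div, mul_one_div, mul_div_assoc]

section Action

open OnePoint

lemma lampSigma_coe (x : ℤ) (t : Bool) : lampSigma ((x : OnePoint ℤ), t) = (↑(x - 1), t) := rfl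

lemma lampSigma_inv_coe (x : ℤ) (t : Bool) :
    lampSigma⁻¹ ((x : OnePoint ℤ), t) = (↑(x + 1), t) := by
  rw [Equiv.Perm.inv_eq_iff_eq, lampSigma_coe, add_sub_cancel_right]

lemma lampSigma_zpow_coe (a x : ℤ) (t : Bool) :
    (lampSigma ^ a) ((x : OnePoint ℤ), t) = (↑(x - a), t) := by
  induction a using Int.induction_on generalizing x with
  | zero => simp
  | succ i ih =>
    rw [zpow_add_one, Equiv.Perm.mul_apply, lampSigma_coe, ih, sub_sub, add_comm]
  | pred i ih =>
    rw [zpow_sub_one, Equiv.Perm.mul_apply, lampSigma_inv_coe, ih, sub_sub_eq_add_sub, add_comm]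

lemma lampSigma_zpow_infty (a : ℤ) (t : Bool) : (lampSigma ^ a) ((∞ : OnePoint ℤ), t) = (∞, t) :=
  Function.IsFixedPt.perm_zpow (e := lampSigma) (x := ((∞ : OnePoint ℤ), t)) rfl a

lemma lampF_coe (x : ℤ) (t : Bool) :
    lampF ((x : OnePoint ℤ), t) = ((x : OnePoint ℤ), xor (decide (x = 0)) t) := by
  let _ : DecidableEq LampX := Classical.decEq _
  by_cases hx : x = 0
  · subst hx; cases t <;> simp [lampF]
  · rw [hx |> decide_eq_false, Bool.false_xor]
    exact Equiv.swap_apply_of_ne_of_ne (by simp [hx]) (by simp [hx])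

lemma lampF_infty (t : Bool) : lampF ((∞ : OnePoint ℤ), t) = (∞, t) := by
  let _ : DecidableEq LampX := Classical.decEq _
  exact Equiv.swap_apply_of_ne_of_ne (by simp) (by simp)

lemma lampfn_coe (n x : ℤ) (t : Bool) :
    lampfn n ((x : OnePoint ℤ), t) = ((x : OnePoint ℤ), xor (decide (x = n)) t) := by
  simp only [lampfn, Equiv.Perm.mul_apply, lampSigma_zpow_coe, lampF_coe, sub_neg_eq_add,
    sub_add_cancel, sub_eq_zero]

lemma lampfn_infty (n : ℤ) (t : Bool) : lampfn n ((∞ : OnePoint ℤ), t) = (∞, t) := by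
  simp only [lampfn, Equiv.Perm.mul_apply, lampSigma_zpow_infty, lampF_infty]

lemma lampProd_cons (a : ℤ) (l : List ℤ) : lampProd (a :: l) = lampProd l * lampfn a := by
  simp [lampProd]

lemma lampProd_coe {l : List ℤ} (hl : l.Nodup) (x : ℤ) (t : Bool) :
    lampProd l ((x : OnePoint ℤ), t) = ((x : OnePoint ℤ), xor (decide (x ∈ l)) t) := by
  induction l generalizing t with
  | nil => simp [lampProd]
  | cons a l ih =>
    obtain ⟨hal, hl⟩ := List.nodup_cons.mp hl
    rw [lampProd_cons, Equiv.Perm.mul_apply, lampfn_coe, ih hl]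
    by_cases hxa : x = a
    · subst hxa; simp [hal]
    · simp [hxa]

lemma lampProd_infty (l : List ℤ) (t : Bool) : lampProd l ((∞ : OnePoint ℤ), t) = (∞, t) := by
  induction l with
  | nil => rfl
  | cons a l ih => rw [lampProd_cons, Equiv.Perm.mul_apply, lampfn_infty, ih]

lemma lampfB_coe (b : Finset ℤ) (x : ℤ) (t : Bool) :
    lampfB b ((x : OnePoint ℤ), t) = ((x : OnePoint ℤ), xor (decide (x ∈ b)) t) := by
  simp only [lampfB, lampProd_coe (b.sort_nodup _), Finset.mem_sort]

lemma lampfB_infty (b : Finset ℤ) (t : Bool) : lampfB b ((∞ : OnePoint ℤ), t) = (∞, t) :=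
  lampProd_infty _ t

def lampElem (p : ℤ × Finset ℤ) : Equiv.Perm LampX := lampSigma ^ p.1 * lampfB p.2

lemma lampElem_coe (p : ℤ × Finset ℤ) (x : ℤ) (t : Bool) :
    lampElem p ((x : OnePoint ℤ), t) = (↑(x - p.1), xor (decide (x ∈ p.2)) t) := by
  rw [lampElem, Equiv.Perm.mul_apply, lampfB_coe, lampSigma_zpow_coe]

lemma lampElem_infty (p : ℤ × Finset ℤ) (t : Bool) :
    lampElem p ((∞ : OnePoint ℤ), t) = (∞, t) := by
  rw [lampElem, Equiv.Perm.mul_apply, lampfB_infty, lampSigma_zpow_infty]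

lemma lampElem_injective : Function.Injective lampElem := by
  rintro ⟨a, b⟩ ⟨a', b'⟩ h
  have hx (x : ℤ) := congrArg (fun e : Equiv.Perm LampX => e ((x : OnePoint ℤ), false)) h
  simp only [lampElem_coe, Prod.mk.injEq, OnePoint.coe_eq_coe, sub_right_inj, Bool.xor_false,
    decide_eq_decide] at hx
  exact Prod.ext (hx 0).1 (Finset.ext fun x => (hx x).2)

lemma lampSigma_mul_lampElem (a : ℤ) (b : Finset ℤ) :
    lampSigma * lampElem (a, b) = lampElem (a + 1, b) := by
  rw [lampElem, lampElem, ← mul_assoc, ← zpow_one_add, add_comm]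

lemma lampF_mul_lampElem (a : ℤ) (b : Finset ℤ) :
    lampF * lampElem (a, b) = lampElem (a, b ∆ {a}) := by
  ext ⟨x, t⟩ : 1
  cases x with
  | infty => rw [Equiv.Perm.mul_apply, lampElem_infty, lampF_infty, lampElem_infty]
  | coe x =>
    rw [Equiv.Perm.mul_apply, lampElem_coe, lampF_coe, lampElem_coe]
    simp only [sub_eq_zero, Finset.mem_symmDiff, Finset.mem_singleton]
    by_cases hxa : x = a <;> by_cases hxb : x ∈ b <;> simp [hxa, hxb]

end Action

section FolnerSet

variable [DecidableEq (Equiv.Perm LampX)]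

/-- The set `F_n^r` of the paper, for `B = B_n`. -/
def lampFolnerSet (n : ℕ) (B : Finset (Finset ℤ)) : Finset (Equiv.Perm LampX) :=
  (Finset.Icc (-(2 ^ n : ℤ)) (2 ^ n) ×ˢ B).image lampElem

lemma two_pow_mul_card_le_card_lampFolnerSet (n : ℕ) (B : Finset (Finset ℤ)) :
    2 ^ n * B.card ≤ (lampFolnerSet n B).card := by
  rw [lampFolnerSet, Finset.card_image_of_injective _ lampElem_injective, Finset.card_product,
    Int.card_Icc]
  gcongr
  have : (0 : ℤ) ≤ 2 ^ n := by positivity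
  zify
  omega

lemma card_lampFolnerSet_sdiff_lampSigma_smul_le (n : ℕ) (B : Finset (Finset ℤ)) :
    (lampFolnerSet n B \ lampSigma • lampFolnerSet n B).card ≤ B.card := by
  refine (Finset.card_image_sdiff_smul_image_le _ _ _ ({-(2 ^ n : ℤ)} ×ˢ B) ?_).trans_eq
    (by rw [Finset.card_product, Finset.card_singleton, one_mul])
  rintro ⟨a, b⟩ hp hpT
  simp only [Finset.mem_product, Finset.mem_Icc, Finset.mem_singleton] at hp hpT ⊢
  have ha : a ≠ -2 ^ n := fun ha => hpT ⟨ha, hp.2⟩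
  exact ⟨(a - 1, b), ⟨⟨by omega, by omega⟩, hp.2⟩, by rw [lampSigma_mul_lampElem, sub_add_cancel]⟩

lemma card_lampFolnerSet_sdiff_lampF_smul_le (n : ℕ) (B : Finset (Finset ℤ))
    (hB : ∀ b ∈ B, b ⊆ Finset.Icc (-(2 ^ n : ℤ)) (2 ^ n))
    (hBwin : ∀ b ∈ B, ∀ b' : Finset ℤ, b' ⊆ Finset.Icc (-(2 ^ n : ℤ)) (2 ^ n) →
      b ∩ Finset.Icc (-(2 * n : ℤ)) (2 * n) = b' ∩ Finset.Icc (-(2 * n : ℤ)) (2 * n) → b' ∈ B) :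
    (lampFolnerSet n B \ lampF • lampFolnerSet n B).card ≤ (4 * n + 1) * B.card := by
  refine (Finset.card_image_sdiff_smul_image_le _ _ _
    (Finset.Icc (-(2 * n : ℤ)) (2 * n) ×ˢ B) ?_).trans_eq
    (by rw [Finset.card_product, Int.card_Icc]; congr 1; omega)
  rintro ⟨a, b⟩ hp hpT
  obtain ⟨ha, hb⟩ := Finset.mem_product.mp hp
  have haW : a ∉ Finset.Icc (-(2 * n : ℤ)) (2 * n) := fun haW =>
    hpT (Finset.mem_product.mpr ⟨haW, hb⟩)
  refine ⟨(a, b ∆ {a}), Finset.mem_product.mpr ⟨ha, hBwin b hb _ ?_ ?_⟩, ?_⟩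
  · exact symmDiff_le_sup.trans (Finset.union_subset (hB b hb) (Finset.singleton_subset_iff.2 ha))
  · change b ⊓ _ = (b ∆ {a}) ⊓ _
    rw [inf_symmDiff_distrib_right, Finset.inf_eq_inter (s := {a}),
      Finset.singleton_inter_of_notMem haW, ← Finset.bot_eq_empty, symmDiff_bot]
  · rw [lampF_mul_lampElem, symmDiff_symmDiff_cancel_right]

lemma card_sdiff_div_card_lampFolnerSet_le {n : ℕ} {B : Finset (Finset ℤ)}
    {g : Equiv.Perm LampX}
    (h : (lampFolnerSet n B \ g • lampFolnerSet n B).card ≤ (4 * n + 1) * B.card) :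
    ((lampFolnerSet n B \ g • lampFolnerSet n B).card : ℝ) / (lampFolnerSet n B).card
      ≤ (4 * n + 1) / 2 ^ n := by
  have hF : (2 ^ n * B.card : ℝ) ≤ (lampFolnerSet n B).card := by
    exact_mod_cast two_pow_mul_card_le_card_lampFolnerSet n B
  refine div_le_of_le_mul₀ (by positivity) (by positivity) ?_
  calc ((lampFolnerSet n B \ g • lampFolnerSet n B).card : ℝ)
      ≤ (4 * n + 1) / 2 ^ n * (2 ^ n * B.card) := by
        rw [← mul_assoc, div_mul_cancel₀ _ (by positivity)]
        exact_mod_cast h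
    _ ≤ (4 * n + 1) / 2 ^ n * (lampFolnerSet n B).card := by gcongr

end FolnerSet

/-- For any sequence `r` in `[0,1]` (entering through the associated family `B_n` of
admissible configurations: finite subsets of `[-2^n, 2^n]` whose trace on the window
`[-2n, 2n]` is one of the prescribed patterns, with entries outside the window
arbitrary), the sets `F_n = {σ^a ∘ f_𝐛 : a ∈ [-2^n, 2^n], 𝐛 ∈ B_n}` form a left Følner
sequence in the Lamplighter group `G = ⟨f, σ⟩`, i.e. `|g F_n Δ F_n|/|F_n| → 0` for
every `g ∈ G`. -/
theorem lamplighter_Fn_left_Folner :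
    haveI : DecidableEq (Equiv.Perm LampX) := Classical.decEq _
    ∀ B : ℕ → Finset (Finset ℤ),
    (∀ n, (B n).Nonempty) →
    (∀ n, ∀ b ∈ B n, b ⊆ Finset.Icc (-(2 ^ n : ℤ)) (2 ^ n)) →
    -- entries outside the window `[-2n, 2n]` are arbitrary: membership in `B n` only
    -- depends on the trace on the window
    (∀ n, ∀ b ∈ B n, ∀ b' : Finset ℤ, b' ⊆ Finset.Icc (-(2 ^ n : ℤ)) (2 ^ n) →
      b ∩ Finset.Icc (-(2 * n : ℤ)) (2 * n) = b' ∩ Finset.Icc (-(2 * n : ℤ)) (2 * n) →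
      b' ∈ B n) →
    ∀ F : ℕ → Finset (Equiv.Perm LampX),
    (∀ n, F n = (Finset.Icc (-(2 ^ n : ℤ)) (2 ^ n) ×ˢ B n).image
        (fun p => lampSigma ^ p.1 * lampfB p.2)) →
    ∀ g ∈ lampG, Tendsto
      (fun n => ((((F n).image (g * ·)) ∆ (F n)).card : ℝ) / (F n).card)
      atTop (𝓝 0) := by
  let _ : DecidableEq (Equiv.Perm LampX) := Classical.decEq _
  intro B _ hB hBwin F hF g hg
  obtain rfl : F = fun n => lampFolnerSet n (B n) := funext hF
  have hgen : {lampF, lampSigma} ⊆ (folnerSubgroup fun n => lampFolnerSet n (B n) : Set _) := by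
    rintro _ (rfl | rfl) <;> refine mem_folnerSubgroup_of_tendsto_card_sdiff
      (squeeze_zero (fun n => by positivity) (fun n => card_sdiff_div_card_lampFolnerSet_le ?_)
        tendsto_four_mul_add_one_div_two_pow)
    · exact card_lampFolnerSet_sdiff_lampF_smul_le n (B n) (hB n) (hBwin n)
    · exact (card_lampFolnerSet_sdiff_lampSigma_smul_le n (B n)).trans
        (Nat.le_mul_of_pos_left _ (by omega))
  exact (Subgroup.closure_le _).2 hgen hg
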